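/- Consider the CHSH game 𝔠 and the angular CHSH strategy determined by functions θ, η: {0,1} → [−π,π]. The value of the CHSH game at this strategy is 𝔠(θ,η) = (1/4)(cos²(η(0)−θ(0)) + cos²(η(0)−θ(1)) + cos²(θ(0)−η(1)) + sin²(θ(1)−η(1))). In particular, for (θ(0), θ(1), η(0), η(1)) = (0, π/3, π/6, −π/6) the value is 𝔠(θ,η) = 13/16, which is strictly greater than 3/4. -/

import Mathlib

noncomputable section

open ComplexConjugate
open MeasureTheory (Measure MeasurePreserving IsProbabilityMeasure MemLp)

/-! ## `ℝ² ⊗ ℝ²` and angular projections -/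

/-- The standard basis vector `i = (1,0)` of `ℝ²`. -/
noncomputable def ivec : EuclideanSpace ℝ (Fin 2) := EuclideanSpace.single 0 1

/-- The standard basis vector `j = (0,1)` of `ℝ²`. -/
noncomputable def jvec : EuclideanSpace ℝ (Fin 2) := EuclideanSpace.single 1 1

/-- The tensor product of two vectors, in the concrete model `ℝ² ⊗ ℝ² ≅ ℝ^{2×2}`
(with the tensor product inner product `⟪u₁⊗v₁, u₂⊗v₂⟫ = ⟪u₁,u₂⟫⟪v₁,v₂⟫`). -/
noncomputable def tens (u v : EuclideanSpace ℝ (Fin 2)) : EuclideanSpace ℝ (Fin 2 × Fin 2) :=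
  (WithLp.equiv 2 (Fin 2 × Fin 2 → ℝ)).symm fun r => u r.1 * v r.2

/-- The tensor product `A ⊗ B` of two operators on `ℝ²`, acting on `ℝ² ⊗ ℝ²`; it satisfies
`(A ⊗ B)(u ⊗ v) = (A u) ⊗ (B v)`. -/
noncomputable def opTensor (A B : EuclideanSpace ℝ (Fin 2) →L[ℝ] EuclideanSpace ℝ (Fin 2))
    (w : EuclideanSpace ℝ (Fin 2 × Fin 2)) : EuclideanSpace ℝ (Fin 2 × Fin 2) :=
  (WithLp.equiv 2 (Fin 2 × Fin 2 → ℝ)).symm fun p => ∑ r : Fin 2 × Fin 2,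
    A (EuclideanSpace.single r.1 1) p.1 * B (EuclideanSpace.single r.2 1) p.2 * w r

/-- The maximally entangled wavefunction `Δ = (1/√2)(i⊗i + j⊗j) ∈ ℝ² ⊗ ℝ²`. -/
noncomputable def DeltaVec : EuclideanSpace ℝ (Fin 2 × Fin 2) :=
  (Real.sqrt 2)⁻¹ • (tens ivec ivec + tens jvec jvec)

/-- `q_θ`: the orthogonal projection of `ℝ²` onto the span of `cos(θ) i + sin(θ) j`. -/
noncomputable def qproj (θ : ℝ) : EuclideanSpace ℝ (Fin 2) →L[ℝ] EuclideanSpace ℝ (Fin 2) :=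
  (ℝ ∙ (Real.cos θ • ivec + Real.sin θ • jvec)).subtypeL ∘L
    Submodule.orthogonalProjection (ℝ ∙ (Real.cos θ • ivec + Real.sin θ • jvec))

/-- `q̂_θ = I - q_θ`: the orthogonal projection of `ℝ²` onto the span of
`sin(θ) i - cos(θ) j`. -/
noncomputable def qhatproj (θ : ℝ) : EuclideanSpace ℝ (Fin 2) →L[ℝ] EuclideanSpace ℝ (Fin 2) :=
  (ℝ ∙ (Real.sin θ • ivec - Real.cos θ • jvec)).subtypeL ∘L
    Submodule.orthogonalProjection (ℝ ∙ (Real.sin θ • ivec - Real.cos θ • jvec))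

/-! ## The CHSH game -/

/-- The payoff of the CHSH game: the players win iff `x AND y = a XOR b`
(questions and answers are bits, `0 ↦ false`, `1 ↦ true`). -/
noncomputable def chshPayoff (x y a b : Bool) : ℝ := if (x && y) = (xor a b) then 1 else 0

/-- The angular CHSH strategy determined by `θ, η : {0,1} → ℝ`:
`p_{x,y}(a,b) = ⟨(P_a ⊗ P_b)Δ, Δ⟩` where `P_0 = q`, `P_1 = q̂` at the respective angles. -/
noncomputable def angularStrategy (θ η : Bool → ℝ) (x y a b : Bool) : ℝ :=
  inner ℝ (opTensor (if a then qhatproj (θ x) else qproj (θ x))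
    (if b then qhatproj (η y) else qproj (η y)) DeltaVec) DeltaVec

/-- The value of the CHSH game (uniform question distribution `π(x,y) = 1/4`) at the angular
strategy determined by `θ, η`. -/
noncomputable def chshValue (θ η : Bool → ℝ) : ℝ :=
  ∑ x : Bool, ∑ y : Bool, (1 / 4 : ℝ) *
    ∑ a : Bool, ∑ b : Bool, chshPayoff x y a b * angularStrategy θ η x y a b

lemma DeltaVec_apply (p : Fin 2 × Fin 2) :
    DeltaVec p = (Real.sqrt 2)⁻¹ * (if p.1 = p.2 then 1 else 0) := by
  rcases p with ⟨p1, p2⟩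
  fin_cases p1 <;> fin_cases p2 <;>
    simp [DeltaVec, tens, ivec, jvec, EuclideanSpace.single_apply,
      WithLp.equiv_symm_apply]

lemma inner_opTensor (A B : EuclideanSpace ℝ (Fin 2) →L[ℝ] EuclideanSpace ℝ (Fin 2)) :
    (inner ℝ (opTensor A B DeltaVec) DeltaVec : ℝ) =
      (1 / 2) * ∑ k : Fin 2, ∑ l : Fin 2,
        A (EuclideanSpace.single k 1) l * B (EuclideanSpace.single k 1) l := by
  have h2 : (Real.sqrt 2)⁻¹ * (Real.sqrt 2)⁻¹ = 1 / 2 := by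
    rw [← mul_inv]
    norm_num [Real.mul_self_sqrt]
  simp only [PiLp.inner_apply, RCLike.inner_apply, conj_trivial, opTensor,
    WithLp.equiv_symm_apply, PiLp.toLp_apply, DeltaVec_apply, Fintype.sum_prod_type, Fin.sum_univ_two]
  norm_num
  have h3 : ((Real.sqrt 2 : ℝ))⁻¹ ^ 2 = 1 / 2 := by rw [sq]; exact h2
  ring_nf
  rw [h3]
  ring

lemma ivec_apply (p : Fin 2) : ivec p = if p = 0 then 1 else 0 := by
  fin_cases p <;> simp [ivec, EuclideanSpace.single_apply]
lemma jvec_apply (p : Fin 2) : jvec p = if p = 0 then 0 else 1 := by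
  fin_cases p <;> simp [jvec, EuclideanSpace.single_apply]

lemma uvec_apply (θ : ℝ) (p : Fin 2) :
    (Real.cos θ • ivec + Real.sin θ • jvec : EuclideanSpace ℝ (Fin 2)) p
      = if p = 0 then Real.cos θ else Real.sin θ := by
  fin_cases p <;> simp [ivec_apply, jvec_apply]

lemma vvec_apply (θ : ℝ) (p : Fin 2) :
    (Real.sin θ • ivec - Real.cos θ • jvec : EuclideanSpace ℝ (Fin 2)) p
      = if p = 0 then Real.sin θ else -Real.cos θ := by
  fin_cases p <;> simp [ivec_apply, jvec_apply]

lemma projL_apply (v : EuclideanSpace ℝ (Fin 2)) (hv : ‖v‖ ^ 2 = 1)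
    (w : EuclideanSpace ℝ (Fin 2)) :
    ((ℝ ∙ v).subtypeL ∘L Submodule.orthogonalProjection (ℝ ∙ v)) w = (inner ℝ v w : ℝ) • v := by
  change (ℝ ∙ v).starProjection w = _
  simp [Submodule.starProjection_singleton, hv]

lemma norm_sq_of_comp (v : EuclideanSpace ℝ (Fin 2)) (h : v 0 ^ 2 + v 1 ^ 2 = 1) :
    ‖v‖ ^ 2 = 1 := by
  rw [← real_inner_self_eq_norm_sq, PiLp.inner_apply]
  simpa [PiLp.inner_apply, Fin.sum_univ_two, sq] using h

lemma qproj_entry (θ : ℝ) (k l : Fin 2) :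
    qproj θ (EuclideanSpace.single k 1) l
      = (if k = 0 then Real.cos θ else Real.sin θ) *
        (if l = 0 then Real.cos θ else Real.sin θ) := by
  have hv : ‖(Real.cos θ • ivec + Real.sin θ • jvec : EuclideanSpace ℝ (Fin 2))‖ ^ 2 = 1 := by
    apply norm_sq_of_comp
    simp only [uvec_apply]
    simp [Real.cos_sq_add_sin_sq]
  rw [qproj, projL_apply _ hv]
  have hi : (inner ℝ (Real.cos θ • ivec + Real.sin θ • jvec : EuclideanSpace ℝ (Fin 2))
      (EuclideanSpace.single k 1) : ℝ) = if k = 0 then Real.cos θ else Real.sin θ := by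
    simp only [PiLp.inner_apply, Fin.sum_univ_two, uvec_apply, RCLike.inner_apply,
      conj_trivial, EuclideanSpace.single_apply]
    fin_cases k <;> norm_num
  rw [hi]
  fin_cases k <;> fin_cases l <;> simp [ivec_apply, jvec_apply]

lemma qhatproj_entry (θ : ℝ) (k l : Fin 2) :
    qhatproj θ (EuclideanSpace.single k 1) l
      = (if k = 0 then Real.sin θ else -Real.cos θ) *
        (if l = 0 then Real.sin θ else -Real.cos θ) := by
  have hv : ‖(Real.sin θ • ivec - Real.cos θ • jvec : EuclideanSpace ℝ (Fin 2))‖ ^ 2 = 1 := by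
    apply norm_sq_of_comp
    simp only [vvec_apply]
    simp [Real.sin_sq_add_cos_sq]
  rw [qhatproj, projL_apply _ hv]
  have hi : (inner ℝ (Real.sin θ • ivec - Real.cos θ • jvec : EuclideanSpace ℝ (Fin 2))
      (EuclideanSpace.single k 1) : ℝ) = if k = 0 then Real.sin θ else -Real.cos θ := by
    simp only [PiLp.inner_apply, Fin.sum_univ_two, vvec_apply, RCLike.inner_apply,
      conj_trivial, EuclideanSpace.single_apply]
    fin_cases k <;> norm_num
  rw [hi]
  fin_cases k <;> fin_cases l <;> simp [ivec_apply, jvec_apply]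

lemma strat_val (θ η : Bool → ℝ) (x y a b : Bool) :
    angularStrategy θ η x y a b =
      if a = b then Real.cos (θ x - η y) ^ 2 / 2 else Real.sin (θ x - η y) ^ 2 / 2 := by
  unfold angularStrategy
  cases a <;> cases b <;>
    · rw [inner_opTensor]
      simp only [Fin.sum_univ_two, qproj_entry, qhatproj_entry, if_true, if_false,
        Bool.false_eq_true, Bool.true_eq_false, reduceIte]
      norm_num [Real.cos_sub, Real.sin_sub]
      ring

lemma chsh_formula (θ η : Bool → ℝ) :
    chshValue θ η = (1 / 4) *
      (Real.cos (η false - θ false) ^ 2 + Real.cos (η false - θ true) ^ 2 +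
        Real.cos (θ false - η true) ^ 2 + Real.sin (θ true - η true) ^ 2) := by
  unfold chshValue
  simp only [strat_val, chshPayoff, Fintype.sum_bool]
  norm_num [Real.cos_sub, Real.sin_sub]
  ring

lemma numeric_case :
    chshValue (fun x => if x then Real.pi / 3 else 0)
        (fun y => if y then -(Real.pi / 6) else Real.pi / 6) = 13 / 16 := by
  rw [chsh_formula]
  norm_num
  have h3 : Real.sqrt 3 ^ 2 = 3 := Real.sq_sqrt (by norm_num)
  rw [show (Real.pi / 6 - Real.pi / 3 : ℝ) = -(Real.pi / 6) by ring,
    show (Real.pi / 3 + Real.pi / 6 : ℝ) = Real.pi / 2 by ring]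
  rw [Real.cos_neg, Real.cos_pi_div_six, Real.sin_pi_div_two]
  nlinarith [h3]

/-- The value of the CHSH game at the angular CHSH strategy determined by
`θ, η : {0,1} → [-π,π]` is
`(1/4)(cos²(η(0)-θ(0)) + cos²(η(0)-θ(1)) + cos²(θ(0)-η(1)) + sin²(θ(1)-η(1)))`.
In particular, for `(θ(0),θ(1),η(0),η(1)) = (0, π/3, π/6, -π/6)` the value is `13/16`,
which is strictly greater than `3/4`. -/
theorem chsh_value_of_angular_strategy :
    (∀ θ η : Bool → ℝ,
      (∀ x, θ x ∈ Set.Icc (-Real.pi) Real.pi) → (∀ y, η y ∈ Set.Icc (-Real.pi) Real.pi) →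
      chshValue θ η = (1 / 4) *
        (Real.cos (η false - θ false) ^ 2 + Real.cos (η false - θ true) ^ 2 +
          Real.cos (θ false - η true) ^ 2 + Real.sin (θ true - η true) ^ 2)) ∧
    chshValue (fun x => if x then Real.pi / 3 else 0)
        (fun y => if y then -(Real.pi / 6) else Real.pi / 6) = 13 / 16 ∧
    (3 / 4 : ℝ) < 13 / 16 := by
  exact ⟨fun θ η _ _ => chsh_formula θ η, numeric_case, by norm_num⟩
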